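/- Let N ≥ 1 and let L = ((c_i),(θ_j)) ∈ LR^N(ℝ²) with c_0 = (−1,0) and c_1 = (0,0). Let λ = ((λ_j^a),(λ_j^b)) and μ = ((μ_j^a),(μ_j^b)) be families of positive reals with λ_1^a = λ_1^b and μ_1^a = μ_1^b, and suppose K := max_{1≤j≤N} max(λ_j^a, λ_j^b) and K' := max_{1≤j≤N} max(μ_j^a, μ_j^b) both satisfy K, K' < min(d_R(L), d_O(L)/2). Then F := P_λ(L) and F' := P_μ(L) are N-beams, and the map γ : [0,1] → (ℝ²)^{2(N+2)}, γ(t) := (1−t)F + tF' (componentwise affine interpolation), satisfies γ(t) = P_{(1−t)λ + tμ}(L) ∈ Faisc^N(ℝ²) for all t ∈ [0,1]; hence γ is a continuous path in Faisc^N(ℝ²) from F to F', so F and F' are homotopic beams. -/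

import Mathlib

open Real Set
open scoped Classical

noncomputable section

abbrev Pt : Type := EuclideanSpace ℝ (Fin 2)

noncomputable def pt (x y : ℝ) : Pt := (WithLp.equiv 2 (Fin 2 → ℝ)).symm ![x, y]

def dot (u v : Pt) : ℝ := u 0 * v 0 + u 1 * v 1

noncomputable def nvec (θ : Real.Angle) : Pt := pt (-θ.sin) θ.cos

noncomputable def dirvec (θ : Real.Angle) : Pt := pt θ.cos θ.sin

noncomputable def angleOf (v : Pt) : Real.Angle := ((Complex.arg ⟨v 0, v 1⟩ : ℝ) : Real.Angle)

/-- The space of `N`-polygonal chains `(ℝ²)^{N+2}`. -/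
abbrev Chain (N : ℕ) := Fin (N + 2) → Pt

/-- Access the `i`-th point of a chain (junk value `0` out of range). -/
def cg {N : ℕ} (c : Chain N) (i : ℕ) : Pt := if h : i < N + 2 then c ⟨i, h⟩ else 0

/-- The `j`-th ray of a chain: `R_0 = (c_0,c_1]`, `R_j = [c_j, c_{j+1}]`. -/
def ray {N : ℕ} (c : Chain N) (j : ℕ) : Set Pt :=
  if j = 0 then segment ℝ (cg c 0) (cg c 1) \ {cg c 0}
  else segment ℝ (cg c j) (cg c (j + 1))

def Obscured {N : ℕ} (c : Chain N) : Prop :=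
  cg c 0 = cg c 1 ∨
    ∃ j k : ℕ, j ≤ N ∧ 1 ≤ k ∧ k ≤ N + 1 ∧ k ≠ j ∧ k ≠ j + 1 ∧ cg c k ∈ ray c j

def Grazing {N : ℕ} (c : Chain N) : Prop :=
  ∃ i : ℕ, 1 ≤ i ∧ i ≤ N ∧ cg c i ∈ openSegment ℝ (cg c (i - 1)) (cg c (i + 1))

/-- Obscuration-free, non-grazing chains. -/
def LO (N : ℕ) : Set (Chain N) := {c | ¬Obscured c ∧ ¬Grazing c}

/-- Access the angle of the `j`-th mirror, `1 ≤ j ≤ N` (junk out of range). -/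
def θg {N : ℕ} (θ : Fin N → Real.Angle) (j : ℕ) : Real.Angle :=
  if h : j - 1 < N then θ ⟨j - 1, h⟩ else 0

/-- Reflexion condition: at each mirror both adjacent dot products with `n(θ_j)`
are nonzero and of the same sign. -/
def IsReflexive {N : ℕ} (c : Chain N) (θ : Fin N → Real.Angle) : Prop :=
  ∀ j : ℕ, 1 ≤ j → j ≤ N →
    0 < dot (cg c (j + 1) - cg c j) (nvec (θg θ j)) *
        dot (cg c (j - 1) - cg c j) (nvec (θg θ j))

abbrev RChain (N : ℕ) := Chain N × (Fin N → Real.Angle)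

/-- The space of reflexive polygonal chains. -/
def LR (N : ℕ) : Set (RChain N) := {L | L.1 ∈ LO N ∧ IsReflexive L.1 L.2}

/-- The open arc `α + ε·(0,π)` in `ℝ/2πℤ`. -/
def arc (α : Real.Angle) (ε : ℤ) : Set Real.Angle :=
  {β | ∃ s : ℝ, 0 < s ∧ s < π ∧ β = α + (((ε : ℝ) * s : ℝ) : Real.Angle)}

/-- Positive orientation set of the `j`-th mirror. -/
def APlus {N : ℕ} (c : Chain N) (j : ℕ) : Set Real.Angle :=
  arc (angleOf (cg c j - cg c (j - 1))) ((-1) ^ j) ∩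
    arc (angleOf (cg c j - cg c (j + 1))) ((-1) ^ j)

/-- Negative orientation set of the `j`-th mirror. -/
def AMinus {N : ℕ} (c : Chain N) (j : ℕ) : Set Real.Angle :=
  arc (angleOf (cg c j - cg c (j - 1))) ((-1) ^ (j + 1)) ∩
    arc (angleOf (cg c j - cg c (j + 1))) ((-1) ^ (j + 1))

/-- The characteristic: index `j : Fin N` corresponds to the `(j+1)`-st mirror. -/
noncomputable def Car {N : ℕ} (L : RChain N) : Fin N → ℤ :=
  fun j => if θg L.2 (j.1 + 1) ∈ APlus L.1 (j.1 + 1) then 1 else -1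

abbrev Beam (N : ℕ) := Chain N × Chain N

def IsPrimaryBeam {N : ℕ} (F : Beam N) : Prop :=
  (∀ k : ℕ, 1 ≤ k → k ≤ N → cg F.1 k ≠ cg F.2 k) ∧
  cg F.1 0 = pt (-1) 0 ∧ cg F.2 0 = pt (-1) 0 ∧
  cg F.1 (N + 1) = cg F.2 (N + 1) ∧
  midpoint ℝ (cg F.1 1) (cg F.2 1) = pt 0 0

def lineThrough (p q : Pt) : Set Pt := {x | ∃ u : ℝ, x = p + u • (q - p)}

noncomputable def pickPt (S : Set Pt) : Pt := if h : S.Nonempty then h.choose else 0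

noncomputable def pickR (S : Set ℝ) : ℝ := if h : S.Nonempty then h.choose else 0

/-- `impact F t k` is the `(k+1)`-st impact point `P_{k+1}^t` of the `t`-polygonal chain. -/
noncomputable def impact {N : ℕ} (F : Beam N) (t : ℝ) : ℕ → Pt
  | 0 => (1 - t) • cg F.1 1 + t • cg F.2 1
  | k + 1 =>
    let i := k + 2
    let prev := impact F t k
    if (lineThrough (cg F.1 (i - 1)) (cg F.1 i) ∩
        lineThrough (cg F.2 (i - 1)) (cg F.2 i)).Nonempty then
      pickPt (lineThrough prev
          (pickPt (lineThrough (cg F.1 (i - 1)) (cg F.1 i) ∩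
            lineThrough (cg F.2 (i - 1)) (cg F.2 i))) ∩
        segment ℝ (cg F.1 i) (cg F.2 i))
    else
      (1 - pickR {l : ℝ | prev = (1 - l) • cg F.1 (i - 1) + l • cg F.2 (i - 1)}) • cg F.1 i +
        pickR {l : ℝ | prev = (1 - l) • cg F.1 (i - 1) + l • cg F.2 (i - 1)} • cg F.2 i

/-- The `t`-polygonal chain `P_t` of a (primary) beam. -/
noncomputable def tChain {N : ℕ} (F : Beam N) (t : ℝ) : Chain N :=
  fun i => if (i : ℕ) = 0 then impact F t 0 + pt (-1) 0 else impact F t ((i : ℕ) - 1)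

/-- The `k`-th mirror `S_k = [a_k, b_k]` of a beam. -/
def mirror {N : ℕ} (F : Beam N) (k : ℕ) : Set Pt := segment ℝ (cg F.1 k) (cg F.2 k)

def NonObscuration {N : ℕ} (F : Beam N) : Prop :=
  ∀ j : ℕ, j ≤ N → ∀ t ∈ Icc (0 : ℝ) 1, ∀ k : ℕ,
    1 ≤ k → k ≤ N + 1 → k ≠ j → k ≠ j + 1 → ray (tChain F t) j ∩ mirror F k = ∅

/-- Four reals are nonzero and of the same sign. -/
def SameSign₄ (x y z w : ℝ) : Prop := 0 < x * y ∧ 0 < x * z ∧ 0 < x * w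

/-- A unit normal vector to the direction `u`. -/
noncomputable def normalOf (u : Pt) : Pt := ‖u‖⁻¹ • pt (-u 1) (u 0)

def ReflexionCond {N : ℕ} (F : Beam N) : Prop :=
  ∀ i : ℕ, 1 ≤ i → i ≤ N →
    SameSign₄
      (dot (cg F.1 (i - 1) - cg F.1 i) (normalOf (cg F.2 i - cg F.1 i)))
      (dot (cg F.2 (i - 1) - cg F.2 i) (normalOf (cg F.2 i - cg F.1 i)))
      (dot (cg F.1 (i + 1) - cg F.1 i) (normalOf (cg F.2 i - cg F.1 i)))
      (dot (cg F.2 (i + 1) - cg F.2 i) (normalOf (cg F.2 i - cg F.1 i)))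

/-- The space of `N`-beams. -/
def Faisc (N : ℕ) : Set (Beam N) :=
  {F | IsPrimaryBeam F ∧ NonObscuration F ∧ ReflexionCond F}

/-- The centered polygonal chain `M(F) = P_{1/2}`. -/
noncomputable def MF {N : ℕ} (F : Beam N) : Chain N := tChain F (1 / 2)

/-- The reflexive polygonal chain induced by a beam. -/
noncomputable def MR {N : ℕ} (F : Beam N) : RChain N :=
  (MF F, fun j => angleOf (cg F.1 (j.1 + 1) - cg F.2 (j.1 + 1)))

/-- The characteristic of a beam. -/
noncomputable def CarF {N : ℕ} (F : Beam N) : Fin N → ℤ := Car (MR F)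

/-- The pair of polygonal chains `P_l(L)` built from a reflexive chain and mirror
half-lengths `la, lb` (indexed by `1 ≤ j ≤ N`). -/
noncomputable def Pl {N : ℕ} (L : RChain N) (la lb : ℕ → ℝ) : Beam N :=
  (fun i => if 1 ≤ (i : ℕ) ∧ (i : ℕ) ≤ N
      then L.1 i + la (i : ℕ) • dirvec (θg L.2 (i : ℕ)) else L.1 i,
   fun i => if 1 ≤ (i : ℕ) ∧ (i : ℕ) ≤ N
      then L.1 i - lb (i : ℕ) • dirvec (θg L.2 (i : ℕ)) else L.1 i)

/-- Minimal mirror-to-mirror distance of a reflexive chain. -/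
noncomputable def dR {N : ℕ} (L : RChain N) : ℝ :=
  sInf {r | ∃ i : ℕ, 1 ≤ i ∧ i ≤ N ∧
    r = min |dot (cg L.1 (i - 1) - cg L.1 i) (nvec (θg L.2 i))|
          |dot (cg L.1 (i + 1) - cg L.1 i) (nvec (θg L.2 i))|}

/-- Minimal distance from the non-adjacent mirrors to the rays. -/
noncomputable def dO {N : ℕ} (L : RChain N) : ℝ :=
  sInf {r | ∃ j k : ℕ, j ≤ N ∧ 1 ≤ k ∧ k ≤ N + 1 ∧ k ≠ j ∧ k ≠ j + 1 ∧
    r = Metric.infDist (cg L.1 k) (ray L.1 j)}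

/-- `K = max_{1 ≤ j ≤ N} max (la j) (lb j)`. -/
noncomputable def Kmax (N : ℕ) (la lb : ℕ → ℝ) : ℝ :=
  sSup {r | ∃ j : ℕ, 1 ≤ j ∧ j ≤ N ∧ r = max (la j) (lb j)}

/-- The subbeam `F_μ` of a beam. -/
noncomputable def subBeam {N : ℕ} (F : Beam N) (μ : ℝ) : Beam N :=
  (fun i => if (i : ℕ) = 0 then pt (-1) 0 else tChain F ((1 - μ) / 2) i,
   fun i => if (i : ℕ) = 0 then pt (-1) 0 else tChain F ((1 + μ) / 2) i)
section Aux

lemma pt_app0 (x y : ℝ) : pt x y 0 = x := by simp [pt]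
lemma pt_app1 (x y : ℝ) : pt x y 1 = y := by simp [pt]
lemma Pt.app_add (u v : Pt) (i : Fin 2) : (u + v) i = u i + v i := rfl
lemma Pt.app_sub (u v : Pt) (i : Fin 2) : (u - v) i = u i - v i := rfl
lemma Pt.app_smul (r : ℝ) (u : Pt) (i : Fin 2) : (r • u) i = r * u i := rfl
lemma Pt.app_neg (u : Pt) (i : Fin 2) : (-u) i = -(u i) := rfl
lemma Pt.app_zero (i : Fin 2) : (0 : Pt) i = 0 := rfl

lemma Pt.ext' {u v : Pt} (h0 : u 0 = v 0) (h1 : u 1 = v 1) : u = v := by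
  ext i; fin_cases i <;> assumption

lemma pt_zero : pt 0 0 = (0 : Pt) := Pt.ext' (by rw [pt_app0]; rfl) (by rw [pt_app1]; rfl)

lemma dot_sub_left (u v w : Pt) : dot (u - v) w = dot u w - dot v w := by
  simp only [dot, Pt.app_sub]; ring
lemma dot_add_left (u v w : Pt) : dot (u + v) w = dot u w + dot v w := by
  simp only [dot, Pt.app_add]; ring
lemma dot_smul_left (r : ℝ) (u v : Pt) : dot (r • u) v = r * dot u v := by
  simp only [dot, Pt.app_smul]; ring
lemma dot_neg_left (u v : Pt) : dot (-u) v = -dot u v := by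
  simp only [dot, Pt.app_neg]; ring
lemma dot_smul_right (r : ℝ) (u v : Pt) : dot u (r • v) = r * dot u v := by
  simp only [dot, Pt.app_smul]; ring

lemma dot_expand (c1 c2 v1 v2 n : Pt) (r1 r2 : ℝ) :
    dot ((c1 + r1 • v1) - (c2 + r2 • v2)) n
      = dot (c1 - c2) n + r1 * dot v1 n - r2 * dot v2 n := by
  simp only [dot, Pt.app_sub, Pt.app_add, Pt.app_smul]; ring

lemma dirvec_app0 (θ : Real.Angle) : dirvec θ 0 = θ.cos := pt_app0 _ _
lemma dirvec_app1 (θ : Real.Angle) : dirvec θ 1 = θ.sin := pt_app1 _ _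
lemma nvec_app0 (θ : Real.Angle) : nvec θ 0 = -θ.sin := pt_app0 _ _
lemma nvec_app1 (θ : Real.Angle) : nvec θ 1 = θ.cos := pt_app1 _ _

lemma dot_dirvec_nvec_self (θ : Real.Angle) : dot (dirvec θ) (nvec θ) = 0 := by
  simp only [dot, dirvec_app0, dirvec_app1, nvec_app0, nvec_app1]; ring

lemma norm_dirvec (θ : Real.Angle) : ‖dirvec θ‖ = 1 := by
  rw [EuclideanSpace.norm_eq, Fin.sum_univ_two, dirvec_app0, dirvec_app1,
    Real.norm_eq_abs, Real.norm_eq_abs, sq_abs, sq_abs, θ.cos_sq_add_sin_sq, Real.sqrt_one]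

lemma dirvec_ne_zero (θ : Real.Angle) : dirvec θ ≠ 0 := by
  intro h
  have := norm_dirvec θ
  rw [h, norm_zero] at this
  norm_num at this

lemma abs_dot_dirvec_nvec (a b : Real.Angle) : |dot (dirvec a) (nvec b)| ≤ 1 := by
  have h1 := a.cos_sq_add_sin_sq
  have h2 := b.cos_sq_add_sin_sq
  have : dot (dirvec a) (nvec b) = a.cos * (-b.sin) + a.sin * b.cos := by
    simp only [dot, dirvec_app0, dirvec_app1, nvec_app0, nvec_app1]
  rw [this, abs_le]
  constructor <;> nlinarith [sq_nonneg (a.cos * b.cos + a.sin * b.sin),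
    sq_nonneg (a.cos * b.sin - a.sin * b.cos), sq_nonneg (a.cos * (-b.sin) + a.sin * b.cos + 1),
    sq_nonneg (a.cos * (-b.sin) + a.sin * b.cos - 1)]

lemma pickPt_mem {S : Set Pt} (h : S.Nonempty) : pickPt S ∈ S := by
  rw [pickPt, dif_pos h]; exact h.choose_spec

lemma pickR_mem {S : Set ℝ} (h : S.Nonempty) : pickR S ∈ S := by
  rw [pickR, dif_pos h]; exact h.choose_spec

lemma sign_pert {X Y e f : ℝ} (hXY : 0 < X * Y) (he : |e| < |X|) (hf : |f| < |Y|) :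
    0 < (X + e) * (Y + f) := by
  rcases lt_trichotomy X 0 with h | h | h
  · have hY : Y < 0 := by nlinarith
    rw [abs_of_neg h] at he
    rw [abs_of_neg hY] at hf
    have h1 := (abs_lt.mp he).2
    have h2 := (abs_lt.mp hf).2
    nlinarith
  · rw [h, zero_mul] at hXY; exact absurd hXY (lt_irrefl _)
  · have hY : 0 < Y := by nlinarith
    rw [abs_of_pos h] at he
    rw [abs_of_pos hY] at hf
    have h1 := (abs_lt.mp he).1
    have h2 := (abs_lt.mp hf).1
    nlinarith

lemma corr_bound {A g K : ℝ} (h0 : 0 ≤ A) (hA : A ≤ K) (hg : |g| ≤ 1) : |A * g| ≤ K := by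
  rw [abs_mul, abs_of_nonneg h0]
  nlinarith [abs_nonneg g]

lemma combo_norm {p q cp cq : Pt} {s K : ℝ} (hs0 : 0 ≤ s) (hs1 : s ≤ 1)
    (hp : ‖p - cp‖ ≤ K) (hq : ‖q - cq‖ ≤ K) :
    ‖((1 - s) • p + s • q) - ((1 - s) • cp + s • cq)‖ ≤ K := by
  have h : ((1 - s) • p + s • q) - ((1 - s) • cp + s • cq)
      = (1 - s) • (p - cp) + s • (q - cq) := by module
  rw [h]
  calc ‖(1 - s) • (p - cp) + s • (q - cq)‖ ≤ ‖(1 - s) • (p - cp)‖ + ‖s • (q - cq)‖ :=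
        norm_add_le _ _
    _ ≤ (1 - s) * K + s * K := by
        rw [norm_smul, norm_smul, Real.norm_eq_abs, Real.norm_eq_abs,
          abs_of_nonneg (by linarith : (0:ℝ) ≤ 1 - s), abs_of_nonneg hs0]
        have := norm_nonneg (p - cp); have := norm_nonneg (q - cq)
        nlinarith
    _ ≤ K := by nlinarith [hp, hq, norm_nonneg (p - cp)]

end Aux
section Geo

lemma mem_lineThrough_iff {p q x : Pt} : x ∈ lineThrough p q ↔ ∃ u : ℝ, x = p + u • (q - p) :=
  Iff.rfl

lemma self_mem_lineThrough_right (p q : Pt) : q ∈ lineThrough p q := ⟨1, by module⟩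

lemma meet_final {n' pa pb q m : Pt}
    (hma : m ∈ lineThrough pa q) (hmb : m ∈ lineThrough pb q)
    (hpn' : dot (pb - pa) n' = 0) (hpab : pa ≠ pb)
    (hEa : dot (q - pa) n' ≠ 0) (hEb : dot (q - pb) n' ≠ 0) : m = q := by
  obtain ⟨u, hu⟩ := hma
  obtain ⟨u', hu'⟩ := hmb
  have h1 : dot (m - pa) n' = u * dot (q - pa) n' := by
    rw [show m - pa = u • (q - pa) by rw [hu]; module, dot_smul_left]
  have h2 : dot (m - pb) n' = u' * dot (q - pb) n' := by
    rw [show m - pb = u' • (q - pb) by rw [hu']; module, dot_smul_left]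
  have h3 : dot (m - pa) n' - dot (m - pb) n' = dot (pb - pa) n' := by
    rw [← dot_sub_left]
    congr 1
    module
  have h4 : u * dot (q - pa) n' = u' * dot (q - pb) n' := by
    rw [hpn'] at h3; rw [h1, h2] at h3; linarith
  have h5 : m - q = (1 - u) • (pa - q) := by rw [hu]; module
  have h6 : m - q = (1 - u') • (pb - q) := by rw [hu']; module
  have h7 : (1 - u) * dot (q - pa) n' = (1 - u') * dot (q - pb) n' := by
    have e5 : dot (m - q) n' = (1 - u) * dot (pa - q) n' := by rw [h5, dot_smul_left]
    have e6 : dot (m - q) n' = (1 - u') * dot (pb - q) n' := by rw [h6, dot_smul_left]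
    have ea : dot (pa - q) n' = -dot (q - pa) n' := by
      rw [← dot_neg_left]; congr 1; module
    have eb : dot (pb - q) n' = -dot (q - pb) n' := by
      rw [← dot_neg_left]; congr 1; module
    rw [ea] at e5; rw [eb] at e6
    nlinarith [e5, e6]
  have hEeq : dot (q - pa) n' = dot (q - pb) n' := by nlinarith [h4, h7]
  have huu : u = u' := by
    rw [hEeq] at h4
    exact mul_right_cancel₀ hEb h4
  have h8 : (1 - u) • (pa - pb) = 0 := by
    have : (1 - u) • (pa - q) - (1 - u) • (pb - q) = (1 - u) • (pa - pb) := by module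
    rw [← this, ← h5, huu, ← h6, sub_self]
  rcases smul_eq_zero.mp h8 with h | h
  · have : u = 1 := by linarith [sub_eq_zero.mp (by linarith [h] : (1:ℝ) - u = 0)]
    rw [this] at h5
    simpa [sub_eq_zero] using (by rw [h5]; module : m - q = 0)
  · exact absurd (sub_eq_zero.mp h) hpab

set_option maxHeartbeats 1000000 in
lemma meet_step {n n' pa pb qa qb prev m : Pt} {lam : ℝ}
    (hlam0 : 0 ≤ lam) (hlam1 : lam ≤ 1)
    (hprev : prev = (1 - lam) • pa + lam • pb)
    (hma : m ∈ lineThrough pa qa) (hmb : m ∈ lineThrough pb qb)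
    (hqn : dot (qb - qa) n = 0) (hpn' : dot (pb - pa) n' = 0)
    (hpab : pa ≠ pb) (hqab : qa ≠ qb)
    (hDab : 0 < dot (pa - qa) n * dot (pb - qb) n)
    (hEab : 0 < dot (qa - pa) n' * dot (qb - pb) n') :
    ∃ lam' : ℝ, 0 ≤ lam' ∧ lam' ≤ 1 ∧
      (1 - lam') • qa + lam' • qb ∈ lineThrough prev m ∩ segment ℝ qa qb := by
  obtain ⟨u, hu⟩ := hma
  obtain ⟨u', hu'⟩ := hmb
  set Da := dot (pa - qa) n with hDa_def
  set Db := dot (pb - qb) n with hDb_def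
  set Ea := dot (qa - pa) n' with hEa_def
  set Eb := dot (qb - pb) n' with hEb_def
  have hDa : Da ≠ 0 := by intro h; rw [h, zero_mul] at hDab; exact absurd hDab (lt_irrefl _)
  have hDb : Db ≠ 0 := by intro h; rw [h, mul_zero] at hDab; exact absurd hDab (lt_irrefl _)
  have hEa : Ea ≠ 0 := by intro h; rw [h, zero_mul] at hEab; exact absurd hEab (lt_irrefl _)
  have hEb : Eb ≠ 0 := by intro h; rw [h, mul_zero] at hEab; exact absurd hEab (lt_irrefl _)
  have hmqa : m - qa = (1 - u) • (pa - qa) := by rw [hu]; module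
  have hmqb : m - qb = (1 - u') • (pb - qb) := by rw [hu']; module
  have hw1 : dot (m - qa) n = (1 - u) * Da := by rw [hmqa, dot_smul_left]
  have hw2 : dot (m - qb) n = (1 - u') * Db := by rw [hmqb, dot_smul_left]
  have hweq : (1 - u) * Da = (1 - u') * Db := by
    have h3 : dot (m - qa) n - dot (m - qb) n = dot (qb - qa) n := by
      rw [← dot_sub_left]; congr 1; module
    rw [hqn, hw1, hw2] at h3; linarith
  have hmpa : m - pa = u • (qa - pa) := by rw [hu]; module
  have hmpb : m - pb = u' • (qb - pb) := by rw [hu']; module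
  have hueq : u * Ea = u' * Eb := by
    have h3 : dot (m - pa) n' - dot (m - pb) n' = dot (pb - pa) n' := by
      rw [← dot_sub_left]; congr 1; module
    rw [hpn', hmpa, hmpb, dot_smul_left, dot_smul_left] at h3; linarith
  -- u ≠ 0 and u' ≠ 0
  have hu'ne0 : u' ≠ 0 := by
    intro h
    have hm : m = pb := by rw [hu', h]; module
    have : dot (m - pa) n' = u * Ea := by rw [hmpa, dot_smul_left]
    rw [hm] at this
    have hz : dot (pb - pa) n' = 0 := hpn'
    rw [hz] at this
    have hu0 : u = 0 := by
      rcases mul_eq_zero.mp this.symm with h' | h'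
      · exact h'
      · exact absurd h' hEa
    have hm2 : m = pa := by rw [hu, hu0]; module
    exact hpab (hm2.symm.trans hm)
  have hune0 : u ≠ 0 := by
    intro h
    have hm : m = pa := by rw [hu, h]; module
    have : dot (m - pb) n' = u' * Eb := by rw [hmpb, dot_smul_left]
    rw [hm] at this
    have hz : dot (pa - pb) n' = 0 := by
      rw [show pa - pb = -(pb - pa) by module, dot_neg_left, hpn', neg_zero]
    rw [hz] at this
    rcases mul_eq_zero.mp this.symm with h' | h'
    · have hm2 : m = pb := by rw [hu', h']; module
      exact hpab (hm.symm.trans hm2)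
    · exact absurd h' hEb
  -- u ≠ 1 and u' ≠ 1
  have hune1 : u ≠ 1 := by
    intro h
    have hw0 : (1 - u') * Db = 0 := by rw [← hweq, h]; ring
    have hu'1 : u' = 1 := by
      rcases mul_eq_zero.mp hw0 with h' | h'
      · linarith
      · exact absurd h' hDb
    have hm1 : m = qa := by rw [hu, h]; module
    have hm2 : m = qb := by rw [hu', hu'1]; module
    exact hqab (hm1.symm.trans hm2)
  have hu'ne1 : u' ≠ 1 := by
    intro h
    have hw0 : (1 - u) * Da = 0 := by rw [hweq, h]; ring
    have hu1 : u = 1 := by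
      rcases mul_eq_zero.mp hw0 with h' | h'
      · linarith
      · exact absurd h' hDa
    exact hune1 hu1
  -- positivity
  have huu' : 0 < u * u' := by
    rcases lt_trichotomy (u * u') 0 with h | h | h
    · exfalso
      have hlt : (u * Ea) * (u' * Eb) < 0 := by
        rw [show (u * Ea) * (u' * Eb) = (u * u') * (Ea * Eb) by ring]
        exact mul_neg_of_neg_of_pos h hEab
      rw [← hueq] at hlt
      exact absurd hlt (not_lt.mpr (mul_self_nonneg _))
    · exfalso
      rcases mul_eq_zero.mp h with h' | h'
      exacts [hune0 h', hu'ne0 h']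
    · exact h
  have h1u : 0 < (1 - u) * (1 - u') := by
    have hne : (1 - u) * Da ≠ 0 := mul_ne_zero (sub_ne_zero.mpr (Ne.symm hune1)) hDa
    have hs : 0 < ((1 - u) * Da) * ((1 - u) * Da) :=
      lt_of_le_of_ne (mul_self_nonneg _) (Ne.symm (mul_ne_zero hne hne))
    have hid : ((1 - u) * Da) * ((1 - u') * Db) = ((1 - u) * (1 - u')) * (Da * Db) := by ring
    rw [← hweq] at hid
    rw [hid] at hs
    have h2 := div_pos hs hDab
    rwa [mul_div_cancel_right₀ _ hDab.ne'] at h2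
  set al := (u - 1) / u with hal_def
  set be := (u' - 1) / u' with hbe_def
  have hqam : qa - m = al • (pa - m) := by
    have h1 : qa - m = (u - 1) • (pa - qa) := by rw [hu]; module
    have h2 : pa - m = u • (pa - qa) := by rw [hu]; module
    rw [h1, h2, smul_smul, hal_def, div_mul_cancel₀ _ hune0]
  have hqbm : qb - m = be • (pb - m) := by
    have h1 : qb - m = (u' - 1) • (pb - qb) := by rw [hu']; module
    have h2 : pb - m = u' • (pb - qb) := by rw [hu']; module
    rw [h1, h2, smul_smul, hbe_def, div_mul_cancel₀ _ hu'ne0]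
  have halbe : 0 < al * be := by
    have : al * be = ((u - 1) * (u' - 1)) / (u * u') := by
      rw [hal_def, hbe_def, div_mul_div_comm]
    rw [this]
    apply div_pos _ huu'
    rw [show (u - 1) * (u' - 1) = (1 - u) * (1 - u') by ring]
    exact h1u
  set Dn := (1 - lam) * be + lam * al with hDn_def
  have key : (0 < al ∧ 0 < be ∧ 0 < Dn) ∨ (al < 0 ∧ be < 0 ∧ Dn < 0) := by
    rcases mul_pos_iff.mp halbe with ⟨h, hbe⟩ | ⟨h, hbe⟩
    · left
      refine ⟨h, hbe, ?_⟩
      rcases eq_or_lt_of_le hlam1 with h1 | h1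
      · rw [hDn_def, h1]; simpa using h
      · have := mul_pos (by linarith : (0:ℝ) < 1 - lam) hbe
        have := mul_nonneg hlam0 h.le
        rw [hDn_def]; linarith
    · right
      refine ⟨h, hbe, ?_⟩
      rcases eq_or_lt_of_le hlam1 with h1 | h1
      · rw [hDn_def, h1]; simpa using h
      · have := mul_neg_of_pos_of_neg (by linarith : (0:ℝ) < 1 - lam) hbe
        have := mul_nonpos_of_nonneg_of_nonpos hlam0 h.le
        rw [hDn_def]; linarith
  have hDnne : Dn ≠ 0 := by
    rcases key with ⟨_, _, h⟩ | ⟨_, _, h⟩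
    exacts [h.ne', h.ne]
  set lam' := lam * al / Dn with hlam'_def
  have hl0 : 0 ≤ lam' := by
    rcases key with ⟨ha, _, hd⟩ | ⟨ha, _, hd⟩
    · exact div_nonneg (mul_nonneg hlam0 ha.le) hd.le
    · rw [hlam'_def, ← neg_div_neg_eq]
      exact div_nonneg (neg_nonneg.mpr (mul_nonpos_of_nonneg_of_nonpos hlam0 ha.le))
        (neg_nonneg.mpr hd.le)
  have hl1 : lam' ≤ 1 := by
    rcases key with ⟨ha, hb, hd⟩ | ⟨ha, hb, hd⟩
    · rw [hlam'_def, div_le_one hd]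
      have := mul_nonneg (by linarith : (0:ℝ) ≤ 1 - lam) hb.le
      rw [hDn_def]; linarith
    · rw [hlam'_def, div_le_iff_of_neg hd, one_mul]
      have := mul_nonpos_of_nonneg_of_nonpos (by linarith : (0:ℝ) ≤ 1 - lam) hb.le
      rw [hDn_def]; linarith
  refine ⟨lam', hl0, hl1, ?_, ?_⟩
  · -- membership in lineThrough prev m
    refine ⟨1 - al * be / Dn, ?_⟩
    have hqa' : qa = m + al • (pa - m) := by
      rw [← hqam]; module
    have hqb' : qb = m + be • (pb - m) := by
      rw [← hqbm]; module
    rw [hqa', hqb', hprev, hlam'_def]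
    match_scalars <;> field_simp <;> ring
  · rw [segment_eq_image]
    exact ⟨lam', ⟨hl0, hl1⟩, rfl⟩

end Geo
section Unfold

lemma cg_lt {N : ℕ} (c : Chain N) (j : ℕ) (h : j < N + 2) : cg c j = c ⟨j, h⟩ := dif_pos h

lemma cg_Pl_fst {N : ℕ} (L : RChain N) (la lb : ℕ → ℝ) (j : ℕ) (hj : j ≤ N + 1) :
    cg (Pl L la lb).1 j
      = cg L.1 j + (if 1 ≤ j ∧ j ≤ N then la j else 0) • dirvec (θg L.2 j) := by
  have h : j < N + 2 := by omega
  rw [cg_lt _ j h, cg_lt _ j h, Pl]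
  by_cases hc : 1 ≤ j ∧ j ≤ N
  · simp only [Fin.val_mk] at *
    rw [if_pos hc, if_pos hc]
  · simp only [Fin.val_mk] at *
    rw [if_neg hc, if_neg hc, zero_smul, add_zero]

lemma cg_Pl_snd {N : ℕ} (L : RChain N) (la lb : ℕ → ℝ) (j : ℕ) (hj : j ≤ N + 1) :
    cg (Pl L la lb).2 j
      = cg L.1 j + (if 1 ≤ j ∧ j ≤ N then -lb j else 0) • dirvec (θg L.2 j) := by
  have h : j < N + 2 := by omega
  rw [cg_lt _ j h, cg_lt _ j h, Pl]
  by_cases hc : 1 ≤ j ∧ j ≤ N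
  · simp only [Fin.val_mk] at *
    rw [if_pos hc, if_pos hc, neg_smul, sub_eq_add_neg]
  · simp only [Fin.val_mk] at *
    rw [if_neg hc, if_neg hc, zero_smul, add_zero]

lemma impact_zero {N : ℕ} (F : Beam N) (t : ℝ) :
    impact F t 0 = (1 - t) • cg F.1 1 + t • cg F.2 1 := rfl

lemma impact_succ {N : ℕ} (F : Beam N) (t : ℝ) (k : ℕ) :
    impact F t (k + 1) =
      if (lineThrough (cg F.1 (k + 1)) (cg F.1 (k + 2)) ∩
          lineThrough (cg F.2 (k + 1)) (cg F.2 (k + 2))).Nonempty then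
        pickPt (lineThrough (impact F t k)
            (pickPt (lineThrough (cg F.1 (k + 1)) (cg F.1 (k + 2)) ∩
              lineThrough (cg F.2 (k + 1)) (cg F.2 (k + 2)))) ∩
          segment ℝ (cg F.1 (k + 2)) (cg F.2 (k + 2)))
      else
        (1 - pickR {l : ℝ | impact F t k
            = (1 - l) • cg F.1 (k + 1) + l • cg F.2 (k + 1)}) • cg F.1 (k + 2) +
          pickR {l : ℝ | impact F t k
            = (1 - l) • cg F.1 (k + 1) + l • cg F.2 (k + 1)} • cg F.2 (k + 2) := rfl

lemma cg_tChain_zero {N : ℕ} (F : Beam N) (t : ℝ) :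
    cg (tChain F t) 0 = impact F t 0 + pt (-1) 0 := by
  have h : (0 : ℕ) < N + 2 := by omega
  rw [cg_lt _ 0 h, tChain]
  simp only [Fin.val_mk]
  simp

lemma cg_tChain_pos {N : ℕ} (F : Beam N) (t : ℝ) (j : ℕ) (h1 : 1 ≤ j) (hj : j ≤ N + 1) :
    cg (tChain F t) j = impact F t (j - 1) := by
  have h : j < N + 2 := by omega
  rw [cg_lt _ j h, tChain]
  simp only [Fin.val_mk]
  rw [if_neg (by omega)]

end Unfold
section Bounds

lemma Kmax_bddAbove (N : ℕ) (la lb : ℕ → ℝ) :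
    BddAbove {r | ∃ j : ℕ, 1 ≤ j ∧ j ≤ N ∧ r = max (la j) (lb j)} := by
  apply Set.Finite.bddAbove
  apply Set.Finite.subset ((Set.finite_Icc 1 N).image (fun j => max (la j) (lb j)))
  rintro r ⟨j, h1, h2, rfl⟩
  exact ⟨j, Set.mem_Icc.mpr ⟨h1, h2⟩, rfl⟩

lemma le_Kmax {N : ℕ} {la lb : ℕ → ℝ} {j : ℕ} (h1 : 1 ≤ j) (h2 : j ≤ N) :
    la j ≤ Kmax N la lb ∧ lb j ≤ Kmax N la lb := by
  have hm : max (la j) (lb j) ≤ Kmax N la lb :=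
    le_csSup (Kmax_bddAbove N la lb) ⟨j, h1, h2, rfl⟩
  exact ⟨le_trans (le_max_left _ _) hm, le_trans (le_max_right _ _) hm⟩

lemma dR_le {N : ℕ} (L : RChain N) {i : ℕ} (h1 : 1 ≤ i) (h2 : i ≤ N) :
    dR L ≤ |dot (cg L.1 (i - 1) - cg L.1 i) (nvec (θg L.2 i))| ∧
    dR L ≤ |dot (cg L.1 (i + 1) - cg L.1 i) (nvec (θg L.2 i))| := by
  have hb : BddBelow {r | ∃ i : ℕ, 1 ≤ i ∧ i ≤ N ∧
      r = min |dot (cg L.1 (i - 1) - cg L.1 i) (nvec (θg L.2 i))|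
            |dot (cg L.1 (i + 1) - cg L.1 i) (nvec (θg L.2 i))|} := by
    refine ⟨0, ?_⟩
    rintro r ⟨i, _, _, rfl⟩
    exact le_min (abs_nonneg _) (abs_nonneg _)
  have h := csInf_le hb (show _ ∈ _ from ⟨i, h1, h2, rfl⟩)
  exact ⟨h.trans (min_le_left _ _), h.trans (min_le_right _ _)⟩

lemma dO_le {N : ℕ} (L : RChain N) {j k : ℕ} (hj : j ≤ N) (hk1 : 1 ≤ k) (hk2 : k ≤ N + 1)
    (hkj : k ≠ j) (hkj1 : k ≠ j + 1) :
    dO L ≤ Metric.infDist (cg L.1 k) (ray L.1 j) := by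
  have hb : BddBelow {r | ∃ j k : ℕ, j ≤ N ∧ 1 ≤ k ∧ k ≤ N + 1 ∧ k ≠ j ∧ k ≠ j + 1 ∧
      r = Metric.infDist (cg L.1 k) (ray L.1 j)} := by
    refine ⟨0, ?_⟩
    rintro r ⟨j, k, _, _, _, _, _, rfl⟩
    exact Metric.infDist_nonneg
  exact csInf_le hb ⟨j, k, hj, hk1, hk2, hkj, hkj1, rfl⟩

end Bounds
section MainInd

lemma dot_expand' (c1 c2 v n : Pt) (r : ℝ) :
    dot (c1 - (c2 + r • v)) n = dot (c1 - c2) n - r * dot v n := by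
  simp only [dot, Pt.app_sub, Pt.app_add, Pt.app_smul]; ring

lemma Xne {X dr K : ℝ} (hX : dr ≤ |X|) (hK : K < dr) (hK0 : 0 < K) : X ≠ 0 := by
  intro h; rw [h, abs_zero] at hX; linarith

lemma impact_mem (N : ℕ) (hN : 1 ≤ N) (L : RChain N)
    (la lb : ℕ → ℝ)
    (hla : ∀ j : ℕ, 1 ≤ j → j ≤ N → 0 < la j)
    (hlb : ∀ j : ℕ, 1 ≤ j → j ≤ N → 0 < lb j)
    (hKlt : Kmax N la lb < min (dR L) (dO L / 2))
    (t : ℝ) (ht0 : 0 ≤ t) (ht1 : t ≤ 1) :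
    ∀ k : ℕ, k + 1 ≤ N → ∃ lam : ℝ, 0 ≤ lam ∧ lam ≤ 1 ∧
      impact (Pl L la lb) t k
        = (1 - lam) • cg (Pl L la lb).1 (k + 1) + lam • cg (Pl L la lb).2 (k + 1) := by
  set F := Pl L la lb with hF
  set K := Kmax N la lb with hKdef
  have hKdR : K < dR L := lt_of_lt_of_le hKlt (min_le_left _ _)
  have hK0 : 0 < K := lt_of_lt_of_le (hla 1 le_rfl hN) (le_Kmax le_rfl hN).1
  intro k
  induction k with
  | zero => intro _; exact ⟨t, ht0, ht1, impact_zero _ _⟩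
  | succ k ih =>
    intro hk2
    have hk1N : k + 1 ≤ N := by omega
    have hk2N : k + 2 ≤ N := by omega
    obtain ⟨lam, h0, h1, heq⟩ := ih hk1N
    set n := nvec (θg L.2 (k + 2)) with hn_def
    set n' := nvec (θg L.2 (k + 1)) with hn'_def
    set d := dirvec (θg L.2 (k + 2)) with hd_def
    set d' := dirvec (θg L.2 (k + 1)) with hd'_def
    have hpa : cg F.1 (k + 1) = cg L.1 (k + 1) + la (k + 1) • d' := by
      rw [hF, cg_Pl_fst _ _ _ _ (by omega), if_pos ⟨by omega, hk1N⟩]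
    have hpb : cg F.2 (k + 1) = cg L.1 (k + 1) + (-lb (k + 1)) • d' := by
      rw [hF, cg_Pl_snd _ _ _ _ (by omega), if_pos ⟨by omega, hk1N⟩]
    have hqa : cg F.1 (k + 2) = cg L.1 (k + 2) + la (k + 2) • d := by
      rw [hF, cg_Pl_fst _ _ _ _ (by omega), if_pos ⟨by omega, hk2N⟩]
    have hqb : cg F.2 (k + 2) = cg L.1 (k + 2) + (-lb (k + 2)) • d := by
      rw [hF, cg_Pl_snd _ _ _ _ (by omega), if_pos ⟨by omega, hk2N⟩]
    -- X and Y with dR bounds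
    have hdR2 := dR_le L (show 1 ≤ k + 2 by omega) hk2N
    have hdR1 := dR_le L (show 1 ≤ k + 1 by omega) hk1N
    rw [show k + 2 - 1 = k + 1 from rfl] at hdR2
    rw [show k + 1 + 1 = k + 2 from rfl] at hdR1
    set X := dot (cg L.1 (k + 1) - cg L.1 (k + 2)) n with hX_def
    set Y := dot (cg L.1 (k + 2) - cg L.1 (k + 1)) n' with hY_def
    have hXb : dR L ≤ |X| := hdR2.1
    have hYb : dR L ≤ |Y| := hdR1.2
    have hXne : X ≠ 0 := Xne hXb hKdR hK0
    have hYne : Y ≠ 0 := Xne hYb hKdR hK0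
    -- perturbed dots
    have hDa : dot (cg F.1 (k + 1) - cg F.1 (k + 2)) n
        = X + la (k + 1) * dot d' n := by
      rw [hpa, hqa, dot_expand, dot_dirvec_nvec_self]
      ring
    have hDb : dot (cg F.2 (k + 1) - cg F.2 (k + 2)) n
        = X + (-lb (k + 1)) * dot d' n := by
      rw [hpb, hqb, dot_expand, dot_dirvec_nvec_self]
      ring
    have hEa : dot (cg F.1 (k + 2) - cg F.1 (k + 1)) n'
        = Y + la (k + 2) * dot d n' := by
      rw [hpa, hqa, dot_expand, dot_dirvec_nvec_self]
      ring
    have hEb : dot (cg F.2 (k + 2) - cg F.2 (k + 1)) n'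
        = Y + (-lb (k + 2)) * dot d n' := by
      rw [hpb, hqb, dot_expand, dot_dirvec_nvec_self]
      ring
    have hbla1 : |la (k + 1) * dot d' n| ≤ K :=
      corr_bound (hla _ (by omega) hk1N).le (le_Kmax (by omega) hk1N).1 (abs_dot_dirvec_nvec _ _)
    have hblb1 : |(-lb (k + 1)) * dot d' n| ≤ K := by
      rw [neg_mul, abs_neg]
      exact corr_bound (hlb _ (by omega) hk1N).le (le_Kmax (by omega) hk1N).2
        (abs_dot_dirvec_nvec _ _)
    have hbla2 : |la (k + 2) * dot d n'| ≤ K :=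
      corr_bound (hla _ (by omega) hk2N).le (le_Kmax (by omega) hk2N).1 (abs_dot_dirvec_nvec _ _)
    have hblb2 : |(-lb (k + 2)) * dot d n'| ≤ K := by
      rw [neg_mul, abs_neg]
      exact corr_bound (hlb _ (by omega) hk2N).le (le_Kmax (by omega) hk2N).2
        (abs_dot_dirvec_nvec _ _)
    have hDab : 0 < dot (cg F.1 (k + 1) - cg F.1 (k + 2)) n
        * dot (cg F.2 (k + 1) - cg F.2 (k + 2)) n := by
      rw [hDa, hDb]
      exact sign_pert (mul_self_pos.mpr hXne)
        (lt_of_le_of_lt hbla1 (lt_of_lt_of_le hKdR hXb))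
        (lt_of_le_of_lt hblb1 (lt_of_lt_of_le hKdR hXb))
    have hEab : 0 < dot (cg F.1 (k + 2) - cg F.1 (k + 1)) n'
        * dot (cg F.2 (k + 2) - cg F.2 (k + 1)) n' := by
      rw [hEa, hEb]
      exact sign_pert (mul_self_pos.mpr hYne)
        (lt_of_le_of_lt hbla2 (lt_of_lt_of_le hKdR hYb))
        (lt_of_le_of_lt hblb2 (lt_of_lt_of_le hKdR hYb))
    have hqn : dot (cg F.2 (k + 2) - cg F.1 (k + 2)) n = 0 := by
      rw [hqa, hqb, dot_expand, dot_dirvec_nvec_self, sub_self]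
      have : dot (0 : Pt) n = 0 := by simp only [dot, Pt.app_zero]; ring
      rw [this]; ring
    have hpn' : dot (cg F.2 (k + 1) - cg F.1 (k + 1)) n' = 0 := by
      rw [hpa, hpb, dot_expand, dot_dirvec_nvec_self, sub_self]
      have : dot (0 : Pt) n' = 0 := by simp only [dot, Pt.app_zero]; ring
      rw [this]; ring
    have hpab : cg F.1 (k + 1) ≠ cg F.2 (k + 1) := by
      intro h
      have hdiff : cg F.1 (k + 1) - cg F.2 (k + 1) = (la (k + 1) + lb (k + 1)) • d' := by
        rw [hpa, hpb]; module
      rw [h, sub_self] at hdiff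
      have hposa := hla _ (by omega) hk1N
      have hposb := hlb _ (by omega) hk1N
      exact absurd hdiff.symm
        (smul_ne_zero (ne_of_gt (by linarith)) (dirvec_ne_zero _))
    have hqab : cg F.1 (k + 2) ≠ cg F.2 (k + 2) := by
      intro h
      have hdiff : cg F.1 (k + 2) - cg F.2 (k + 2) = (la (k + 2) + lb (k + 2)) • d := by
        rw [hqa, hqb]; module
      rw [h, sub_self] at hdiff
      have hposa := hla _ (by omega) hk2N
      have hposb := hlb _ (by omega) hk2N
      exact absurd hdiff.symm
        (smul_ne_zero (ne_of_gt (by linarith)) (dirvec_ne_zero _))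
    rw [impact_succ]
    split_ifs with hmeet
    · have hm := pickPt_mem hmeet
      obtain ⟨lam', hl0, hl1, hmem⟩ :=
        meet_step (n := n) (n' := n') h0 h1 heq hm.1 hm.2 hqn hpn' hpab hqab hDab hEab
      have hne : (lineThrough (impact F t k)
          (pickPt (lineThrough (cg F.1 (k + 1)) (cg F.1 (k + 2)) ∩
            lineThrough (cg F.2 (k + 1)) (cg F.2 (k + 2)))) ∩
          segment ℝ (cg F.1 (k + 2)) (cg F.2 (k + 2))).Nonempty := ⟨_, hmem⟩
      set P := pickPt (lineThrough (impact F t k)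
          (pickPt (lineThrough (cg F.1 (k + 1)) (cg F.1 (k + 2)) ∩
            lineThrough (cg F.2 (k + 1)) (cg F.2 (k + 2)))) ∩
          segment ℝ (cg F.1 (k + 2)) (cg F.2 (k + 2))) with hP_def
      have hp2 : P ∈ segment ℝ (cg F.1 (k + 2)) (cg F.2 (k + 2)) := (pickPt_mem hne).2
      rw [segment_eq_image] at hp2
      obtain ⟨s, hs, hseq⟩ := hp2
      exact ⟨s, hs.1, hs.2, hseq.symm⟩
    · have hmem : lam ∈ {l : ℝ | impact F t k
          = (1 - l) • cg F.1 (k + 1) + l • cg F.2 (k + 1)} := heq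
      have huniq : ∀ l ∈ {l : ℝ | impact F t k
          = (1 - l) • cg F.1 (k + 1) + l • cg F.2 (k + 1)}, l = lam := by
        intro l hl
        have h2 : (l - lam) • (cg F.2 (k + 1) - cg F.1 (k + 1))
            = ((1 - l) • cg F.1 (k + 1) + l • cg F.2 (k + 1))
              - ((1 - lam) • cg F.1 (k + 1) + lam • cg F.2 (k + 1)) := by module
        rw [← hl, ← heq, sub_self] at h2
        rcases smul_eq_zero.mp h2 with h | h
        · exact sub_eq_zero.mp h
        · exact absurd (sub_eq_zero.mp h).symm hpab
      have hpr : pickR {l : ℝ | impact F t k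
          = (1 - l) • cg F.1 (k + 1) + l • cg F.2 (k + 1)} = lam :=
        huniq _ (pickR_mem ⟨lam, hmem⟩)
      rw [hpr]
      exact ⟨lam, h0, h1, rfl⟩

end MainInd
section Last

lemma impact_last (N : ℕ) (hN : 1 ≤ N) (L : RChain N)
    (la lb : ℕ → ℝ)
    (hla : ∀ j : ℕ, 1 ≤ j → j ≤ N → 0 < la j)
    (hlb : ∀ j : ℕ, 1 ≤ j → j ≤ N → 0 < lb j)
    (hKlt : Kmax N la lb < min (dR L) (dO L / 2))
    (t : ℝ) (ht0 : 0 ≤ t) (ht1 : t ≤ 1) :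
    impact (Pl L la lb) t N = cg L.1 (N + 1) := by
  obtain ⟨M, rfl⟩ : ∃ M, N = M + 1 := ⟨N - 1, by omega⟩
  set F := Pl L la lb with hF
  set K := Kmax (M + 1) la lb with hKdef
  have hKdR : K < dR L := lt_of_lt_of_le hKlt (min_le_left _ _)
  have hK0 : 0 < K := lt_of_lt_of_le (hla 1 le_rfl hN) (le_Kmax le_rfl hN).1
  set n' := nvec (θg L.2 (M + 1)) with hn'_def
  set d' := dirvec (θg L.2 (M + 1)) with hd'_def
  have hM1 : (1:ℕ) ≤ M + 1 := by omega
  have hpa : cg F.1 (M + 1) = cg L.1 (M + 1) + la (M + 1) • d' := by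
    rw [hF, cg_Pl_fst _ _ _ _ (by omega), if_pos ⟨hM1, le_rfl⟩]
  have hpb : cg F.2 (M + 1) = cg L.1 (M + 1) + (-lb (M + 1)) • d' := by
    rw [hF, cg_Pl_snd _ _ _ _ (by omega), if_pos ⟨hM1, le_rfl⟩]
  have hqa : cg F.1 (M + 2) = cg L.1 (M + 2) := by
    rw [hF, cg_Pl_fst _ _ _ _ (by omega), if_neg (by omega), zero_smul, add_zero]
  have hqb : cg F.2 (M + 2) = cg L.1 (M + 2) := by
    rw [hF, cg_Pl_snd _ _ _ _ (by omega), if_neg (by omega), zero_smul, add_zero]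
  have hdR1 := dR_le L hM1 (le_refl (M + 1))
  rw [show M + 1 + 1 = M + 2 from rfl] at hdR1
  set Y := dot (cg L.1 (M + 2) - cg L.1 (M + 1)) n' with hY_def
  have hYb : dR L ≤ |Y| := hdR1.2
  have hYne : Y ≠ 0 := Xne hYb hKdR hK0
  have hEa : dot (cg L.1 (M + 2) - cg F.1 (M + 1)) n' = Y := by
    rw [hpa, dot_expand', dot_dirvec_nvec_self]
    ring
  have hEb : dot (cg L.1 (M + 2) - cg F.2 (M + 1)) n' = Y := by
    rw [hpb, dot_expand', dot_dirvec_nvec_self]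
    ring
  have hpn' : dot (cg F.2 (M + 1) - cg F.1 (M + 1)) n' = 0 := by
    rw [hpa, hpb, dot_expand, dot_dirvec_nvec_self, sub_self]
    have : dot (0 : Pt) n' = 0 := by simp only [dot, Pt.app_zero]; ring
    rw [this]; ring
  have hpab : cg F.1 (M + 1) ≠ cg F.2 (M + 1) := by
    intro h
    have hdiff : cg F.1 (M + 1) - cg F.2 (M + 1) = (la (M + 1) + lb (M + 1)) • d' := by
      rw [hpa, hpb]; module
    rw [h, sub_self] at hdiff
    have hposa := hla _ hM1 le_rfl
    have hposb := hlb _ hM1 le_rfl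
    exact absurd hdiff.symm (smul_ne_zero (ne_of_gt (by linarith)) (dirvec_ne_zero _))
  show impact F t (M + 1) = cg L.1 (M + 2)
  rw [impact_succ]
  have hcond : (lineThrough (cg F.1 (M + 1)) (cg F.1 (M + 2)) ∩
      lineThrough (cg F.2 (M + 1)) (cg F.2 (M + 2))).Nonempty := by
    refine ⟨cg L.1 (M + 2), ?_, ?_⟩
    · rw [hqa]; exact self_mem_lineThrough_right _ _
    · rw [hqb]; exact self_mem_lineThrough_right _ _
  rw [if_pos hcond]
  set m := pickPt (lineThrough (cg F.1 (M + 1)) (cg F.1 (M + 2)) ∩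
      lineThrough (cg F.2 (M + 1)) (cg F.2 (M + 2))) with hm_def
  have hm : m ∈ lineThrough (cg F.1 (M + 1)) (cg F.1 (M + 2)) ∩
      lineThrough (cg F.2 (M + 1)) (cg F.2 (M + 2)) := pickPt_mem hcond
  have hm1 : m ∈ lineThrough (cg F.1 (M + 1)) (cg L.1 (M + 2)) := hqa ▸ hm.1
  have hm2 : m ∈ lineThrough (cg F.2 (M + 1)) (cg L.1 (M + 2)) := hqb ▸ hm.2
  have hmq : m = cg L.1 (M + 2) :=
    meet_final hm1 hm2 hpn' hpab (hEa ▸ hYne) (hEb ▸ hYne)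
  rw [hmq, hqa, hqb, segment_same]
  have hne2 : (lineThrough (impact F t M) (cg L.1 (M + 2)) ∩
      ({cg L.1 (M + 2)} : Set Pt)).Nonempty :=
    ⟨cg L.1 (M + 2), self_mem_lineThrough_right _ _, rfl⟩
  have := (pickPt_mem hne2).2
  rwa [Set.mem_singleton_iff] at this

end Last
section Core

lemma normalOf_neg_smul (r : ℝ) (hr : 0 < r) (θ : Real.Angle) :
    normalOf ((-r) • dirvec θ) = (-1 : ℝ) • nvec θ := by
  rw [normalOf]
  have hn : ‖(-r) • dirvec θ‖ = r := by
    rw [norm_smul, norm_dirvec, Real.norm_eq_abs, abs_neg, abs_of_pos hr, mul_one]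
  rw [hn]
  refine Pt.ext' ?_ ?_ <;>
    simp only [Pt.app_smul, pt_app0, pt_app1, nvec_app0, nvec_app1,
      dirvec_app0, dirvec_app1] <;>
    field_simp <;> ring

lemma neg_one_mul_pos {x y : ℝ} (h : 0 < x * y) : 0 < (-1 * x) * (-1 * y) := by
  nlinarith

set_option maxHeartbeats 2000000 in
lemma corePl (N : ℕ) (hN : 1 ≤ N) (L : RChain N)
    (hRef : IsReflexive L.1 L.2)
    (hc0 : cg L.1 0 = pt (-1) 0) (hc1 : cg L.1 1 = pt 0 0)
    (la lb : ℕ → ℝ)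
    (hla : ∀ j : ℕ, 1 ≤ j → j ≤ N → 0 < la j)
    (hlb : ∀ j : ℕ, 1 ≤ j → j ≤ N → 0 < lb j)
    (hab1 : la 1 = lb 1)
    (hKlt : Kmax N la lb < min (dR L) (dO L / 2)) :
    Pl L la lb ∈ Faisc N := by
  set F := Pl L la lb with hF
  set K := Kmax N la lb with hKdef
  have hKdR : K < dR L := lt_of_lt_of_le hKlt (min_le_left _ _)
  have hKdO : K < dO L / 2 := lt_of_lt_of_le hKlt (min_le_right _ _)
  have hK0 : 0 < K := lt_of_lt_of_le (hla 1 le_rfl hN) (le_Kmax le_rfl hN).1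
  have hcg1 : ∀ j : ℕ, j ≤ N + 1 → cg F.1 j
      = cg L.1 j + (if 1 ≤ j ∧ j ≤ N then la j else 0) • dirvec (θg L.2 j) :=
    fun j hj => cg_Pl_fst L la lb j hj
  have hcg2 : ∀ j : ℕ, j ≤ N + 1 → cg F.2 j
      = cg L.1 j + (if 1 ≤ j ∧ j ≤ N then -lb j else 0) • dirvec (θg L.2 j) :=
    fun j hj => cg_Pl_snd L la lb j hj
  have hne : ∀ k : ℕ, 1 ≤ k → k ≤ N → cg F.1 k ≠ cg F.2 k := by
    intro k h1 h2 h
    have e1 := hcg1 k (by omega)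
    have e2 := hcg2 k (by omega)
    rw [if_pos ⟨h1, h2⟩] at e1 e2
    have hdiff : cg F.1 k - cg F.2 k = (la k + lb k) • dirvec (θg L.2 k) := by
      rw [e1, e2]; module
    rw [h, sub_self] at hdiff
    have hposa := hla _ h1 h2
    have hposb := hlb _ h1 h2
    exact absurd hdiff.symm (smul_ne_zero (ne_of_gt (by linarith)) (dirvec_ne_zero _))
  -- endpoint distances of mirrors
  have hmdist : ∀ k : ℕ, 1 ≤ k → k ≤ N + 1 →
      ‖cg F.1 k - cg L.1 k‖ ≤ K ∧ ‖cg F.2 k - cg L.1 k‖ ≤ K := by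
    intro k h1 h2
    have e1 := hcg1 k h2
    have e2 := hcg2 k h2
    by_cases hc : 1 ≤ k ∧ k ≤ N
    · rw [if_pos hc] at e1 e2
      constructor
      · rw [e1, add_sub_cancel_left, norm_smul, norm_dirvec, mul_one, Real.norm_eq_abs,
          abs_of_pos (hla _ hc.1 hc.2)]
        exact (le_Kmax hc.1 hc.2).1
      · rw [e2, add_sub_cancel_left, norm_smul, norm_dirvec, mul_one, Real.norm_eq_abs,
          abs_neg, abs_of_pos (hlb _ hc.1 hc.2)]
        exact (le_Kmax hc.1 hc.2).2
    · rw [if_neg hc, zero_smul, add_zero] at e1 e2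
      rw [e1, e2, sub_self, norm_zero]
      exact ⟨hK0.le, hK0.le⟩
  refine ⟨⟨hne, ?_, ?_, ?_, ?_⟩, ?_, ?_⟩
  · -- a_0
    have e := hcg1 0 (by omega)
    rw [if_neg (by omega), zero_smul, add_zero] at e
    rw [e, hc0]
  · have e := hcg2 0 (by omega)
    rw [if_neg (by omega), zero_smul, add_zero] at e
    rw [e, hc0]
  · have e1 := hcg1 (N + 1) le_rfl
    have e2 := hcg2 (N + 1) le_rfl
    rw [if_neg (by omega), zero_smul, add_zero] at e1 e2
    rw [e1, e2]
  · -- midpoint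
    have e1 := hcg1 1 (by omega)
    have e2 := hcg2 1 (by omega)
    rw [if_pos ⟨le_rfl, hN⟩] at e1 e2
    have hneg : cg F.2 1 = -(cg F.1 1) := by
      rw [e1, e2, hc1, pt_zero, hab1]; module
    rw [hneg, midpoint_self_neg ℝ]
    exact pt_zero.symm
  · -- NonObscuration
    intro j hj t ht k hk1 hk2 hkj hkj1
    rw [Set.eq_empty_iff_forall_notMem]
    rintro x ⟨hxr, hxm⟩
    -- mirror bound
    have hxK : ‖x - cg L.1 k‖ ≤ K := by
      rw [mirror, segment_eq_image] at hxm
      obtain ⟨s, hs, rfl⟩ := hxm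
      have hcb : (1 - s) • cg L.1 k + s • cg L.1 k = cg L.1 k := by module
      calc ‖(1 - s) • cg F.1 k + s • cg F.2 k - cg L.1 k‖
          = ‖((1 - s) • cg F.1 k + s • cg F.2 k)
              - ((1 - s) • cg L.1 k + s • cg L.1 k)‖ := by rw [hcb]
        _ ≤ K := combo_norm hs.1 hs.2 (hmdist k hk1 hk2).1 (hmdist k hk1 hk2).2
    -- chain point bounds
    have hφ : ∀ i : ℕ, 1 ≤ i → i ≤ N + 1 → ‖cg (tChain F t) i - cg L.1 i‖ ≤ K := by
      intro i h1 h2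
      obtain ⟨k', rfl⟩ : ∃ k', i = k' + 1 := ⟨i - 1, by omega⟩
      rw [cg_tChain_pos F t (k' + 1) h1 h2, show k' + 1 - 1 = k' from rfl]
      rcases Nat.lt_or_ge k' N with hlt | hge
      · obtain ⟨lam, hl0, hl1, heq⟩ :=
          impact_mem N hN L la lb hla hlb hKlt t ht.1 ht.2 k' (by omega)
        have e1 := hcg1 (k' + 1) (by omega)
        have e2 := hcg2 (k' + 1) (by omega)
        rw [if_pos ⟨by omega, by omega⟩] at e1 e2
        have hval : impact F t k' - cg L.1 (k' + 1)
            = ((1 - lam) * la (k' + 1) + lam * (-lb (k' + 1))) • dirvec (θg L.2 (k' + 1)) := by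
          rw [heq, e1, e2]; module
        rw [hval, norm_smul, norm_dirvec, mul_one, Real.norm_eq_abs]
        have hKla := (le_Kmax (N := N) (la := la) (lb := lb)
          (show 1 ≤ k' + 1 by omega) (show k' + 1 ≤ N by omega)).1
        have hKlb := (le_Kmax (N := N) (la := la) (lb := lb)
          (show 1 ≤ k' + 1 by omega) (show k' + 1 ≤ N by omega)).2
        have hpla := hla (k' + 1) (by omega) (by omega)
        have hplb := hlb (k' + 1) (by omega) (by omega)
        rw [abs_le]
        constructor <;> nlinarith
      · have hk'N : k' = N := by omega
        rw [hk'N, impact_last N hN L la lb hla hlb hKlt t ht.1 ht.2, sub_self, norm_zero]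
        exact hK0.le
    have hφ0 : ‖cg (tChain F t) 0 - cg L.1 0‖ ≤ K := by
      have hd : cg (tChain F t) 0 - cg L.1 0 = cg (tChain F t) 1 - cg L.1 1 := by
        rw [cg_tChain_zero, cg_tChain_pos F t 1 le_rfl (by omega), hc0, hc1, pt_zero,
          show (1:ℕ) - 1 = 0 from rfl]
        module
      rw [hd]
      exact hφ 1 le_rfl (by omega)
    -- companion point on the ideal ray
    have hmain : ∃ x' ∈ ray L.1 j, ‖x - x'‖ ≤ K := by
      by_cases hj0 : j = 0
      · subst hj0
        rw [ray, if_pos rfl] at hxr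
        obtain ⟨hseg, hnot⟩ := hxr
        rw [segment_eq_image] at hseg
        obtain ⟨s, hs, hxeq⟩ := hseg
        have hsne : s ≠ 0 := by
          intro h
          apply hnot
          rw [← hxeq, h]
          show _ ∈ ({cg (tChain F t) 0} : Set Pt)
          rw [Set.mem_singleton_iff]
          module
        refine ⟨(1 - s) • cg L.1 0 + s • cg L.1 1, ?_, ?_⟩
        · rw [ray, if_pos rfl]
          constructor
          · rw [segment_eq_image]; exact ⟨s, hs, rfl⟩
          · intro hmem
            rw [Set.mem_singleton_iff] at hmem
            have : s • (cg L.1 1 - cg L.1 0) = 0 := by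
              rw [show s • (cg L.1 1 - cg L.1 0)
                  = ((1 - s) • cg L.1 0 + s • cg L.1 1) - cg L.1 0 by module, hmem, sub_self]
            rcases smul_eq_zero.mp this with h | h
            · exact hsne h
            · have h10 : cg L.1 1 - cg L.1 0 ≠ 0 := by
                intro hz
                have : (cg L.1 1 - cg L.1 0) 0 = (1 : ℝ) := by
                  rw [Pt.app_sub, hc0, hc1, pt_app0, pt_app0]; norm_num
                rw [hz, Pt.app_zero] at this
                norm_num at this
              exact h10 h
        · rw [← hxeq]
          exact combo_norm hs.1 hs.2 hφ0 (hφ 1 le_rfl (by omega))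
      · rw [ray, if_neg hj0] at hxr
        rw [segment_eq_image] at hxr
        obtain ⟨s, hs, hxeq⟩ := hxr
        refine ⟨(1 - s) • cg L.1 j + s • cg L.1 (j + 1), ?_, ?_⟩
        · rw [ray, if_neg hj0, segment_eq_image]
          exact ⟨s, hs, rfl⟩
        · rw [← hxeq]
          exact combo_norm hs.1 hs.2 (hφ j (by omega) (by omega)) (hφ (j + 1) (by omega) (by omega))
    obtain ⟨x', hx'mem, hx'K⟩ := hmain
    have h1 : dO L ≤ Metric.infDist (cg L.1 k) (ray L.1 j) := dO_le L hj hk1 hk2 hkj hkj1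
    have h2 : Metric.infDist (cg L.1 k) (ray L.1 j) ≤ dist (cg L.1 k) x' :=
      Metric.infDist_le_dist_of_mem hx'mem
    have h3 : dist (cg L.1 k) x' ≤ ‖x - cg L.1 k‖ + ‖x - x'‖ := by
      rw [dist_eq_norm]
      calc ‖cg L.1 k - x'‖ = ‖(cg L.1 k - x) + (x - x')‖ := by rw [sub_add_sub_cancel]
        _ ≤ ‖cg L.1 k - x‖ + ‖x - x'‖ := norm_add_le _ _
        _ = ‖x - cg L.1 k‖ + ‖x - x'‖ := by rw [norm_sub_rev]
    linarith
  · -- ReflexionCond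
    intro i hi1 hiN
    have e1 := hcg1 i (by omega)
    have e2 := hcg2 i (by omega)
    rw [if_pos ⟨hi1, hiN⟩] at e1 e2
    have hsub : cg F.2 i - cg F.1 i = (-(la i + lb i)) • dirvec (θg L.2 i) := by
      rw [e1, e2]; module
    have hposa := hla _ hi1 hiN
    have hposb := hlb _ hi1 hiN
    have hnrm : normalOf (cg F.2 i - cg F.1 i) = (-1 : ℝ) • nvec (θg L.2 i) := by
      rw [hsub]
      exact normalOf_neg_smul _ (by linarith) _
    set n := nvec (θg L.2 i) with hn_def
    set Xb := dot (cg L.1 (i - 1) - cg L.1 i) n with hXb_def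
    set Xf := dot (cg L.1 (i + 1) - cg L.1 i) n with hXf_def
    have hdRi := dR_le L hi1 hiN
    have hXbb : dR L ≤ |Xb| := hdRi.1
    have hXfb : dR L ≤ |Xf| := hdRi.2
    have hXbne : Xb ≠ 0 := Xne hXbb hKdR hK0
    have hXfne : Xf ≠ 0 := Xne hXfb hKdR hK0
    have hRefi := hRef i hi1 hiN
    -- the four perturbed dots
    have em1 := hcg1 (i - 1) (by omega)
    have em2 := hcg2 (i - 1) (by omega)
    have ep1 := hcg1 (i + 1) (by omega)
    have ep2 := hcg2 (i + 1) (by omega)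
    set ea1 := (if 1 ≤ i - 1 ∧ i - 1 ≤ N then la (i - 1) else 0) with hea1_def
    set eb1 := (if 1 ≤ i - 1 ∧ i - 1 ≤ N then -lb (i - 1) else 0) with heb1_def
    set ea2 := (if 1 ≤ i + 1 ∧ i + 1 ≤ N then la (i + 1) else 0) with hea2_def
    set eb2 := (if 1 ≤ i + 1 ∧ i + 1 ≤ N then -lb (i + 1) else 0) with heb2_def
    have hba1 : |ea1 * dot (dirvec (θg L.2 (i - 1))) n| ≤ K := by
      rw [hea1_def]
      split_ifs with hc
      · exact corr_bound (hla _ hc.1 hc.2).le (le_Kmax hc.1 hc.2).1 (abs_dot_dirvec_nvec _ _)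
      · rw [zero_mul, abs_zero]; exact hK0.le
    have hbb1 : |eb1 * dot (dirvec (θg L.2 (i - 1))) n| ≤ K := by
      rw [heb1_def]
      split_ifs with hc
      · rw [neg_mul, abs_neg]
        exact corr_bound (hlb _ hc.1 hc.2).le (le_Kmax hc.1 hc.2).2 (abs_dot_dirvec_nvec _ _)
      · rw [zero_mul, abs_zero]; exact hK0.le
    have hba2 : |ea2 * dot (dirvec (θg L.2 (i + 1))) n| ≤ K := by
      rw [hea2_def]
      split_ifs with hc
      · exact corr_bound (hla _ hc.1 hc.2).le (le_Kmax hc.1 hc.2).1 (abs_dot_dirvec_nvec _ _)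
      · rw [zero_mul, abs_zero]; exact hK0.le
    have hbb2 : |eb2 * dot (dirvec (θg L.2 (i + 1))) n| ≤ K := by
      rw [heb2_def]
      split_ifs with hc
      · rw [neg_mul, abs_neg]
        exact corr_bound (hlb _ hc.1 hc.2).le (le_Kmax hc.1 hc.2).2 (abs_dot_dirvec_nvec _ _)
      · rw [zero_mul, abs_zero]; exact hK0.le
    have hd1 : dot (cg F.1 (i - 1) - cg F.1 i) n
        = Xb + ea1 * dot (dirvec (θg L.2 (i - 1))) n := by
      rw [em1, e1, dot_expand, dot_dirvec_nvec_self]; ring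
    have hd2 : dot (cg F.2 (i - 1) - cg F.2 i) n
        = Xb + eb1 * dot (dirvec (θg L.2 (i - 1))) n := by
      rw [em2, e2, dot_expand, dot_dirvec_nvec_self]; ring
    have hd3 : dot (cg F.1 (i + 1) - cg F.1 i) n
        = Xf + ea2 * dot (dirvec (θg L.2 (i + 1))) n := by
      rw [ep1, e1, dot_expand, dot_dirvec_nvec_self]; ring
    have hd4 : dot (cg F.2 (i + 1) - cg F.2 i) n
        = Xf + eb2 * dot (dirvec (θg L.2 (i + 1))) n := by
      rw [ep2, e2, dot_expand, dot_dirvec_nvec_self]; ring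
    rw [SameSign₄, hnrm]
    simp only [dot_smul_right]
    refine ⟨neg_one_mul_pos ?_, neg_one_mul_pos ?_, neg_one_mul_pos ?_⟩
    · rw [hd1, hd2]
      exact sign_pert (mul_self_pos.mpr hXbne)
        (lt_of_le_of_lt hba1 (lt_of_lt_of_le hKdR hXbb))
        (lt_of_le_of_lt hbb1 (lt_of_lt_of_le hKdR hXbb))
    · rw [hd1, hd3]
      exact sign_pert (by rw [mul_comm] at hRefi; exact hRefi)
        (lt_of_le_of_lt hba1 (lt_of_lt_of_le hKdR hXbb))
        (lt_of_le_of_lt hba2 (lt_of_lt_of_le hKdR hXfb))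
    · rw [hd1, hd4]
      exact sign_pert (by rw [mul_comm] at hRefi; exact hRefi)
        (lt_of_le_of_lt hba1 (lt_of_lt_of_le hKdR hXbb))
        (lt_of_le_of_lt hbb2 (lt_of_lt_of_le hKdR hXfb))

end Core
/-- for two admissible parameter families `λ`, `μ`, the beams
`P_λ(L)` and `P_μ(L)` are joined by the affine interpolation path, which at time
`t` equals `P_{(1-t)λ + tμ}(L)` and stays in `Faisc^N`. -/
theorem statement15 (N : ℕ) (hN : 1 ≤ N) (L : RChain N) (hL : L ∈ LR N)
    (hc0 : cg L.1 0 = pt (-1) 0) (hc1 : cg L.1 1 = pt 0 0)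
    (laa lab lba lbb : ℕ → ℝ)
    (hlaa : ∀ j : ℕ, 1 ≤ j → j ≤ N → 0 < laa j)
    (hlab : ∀ j : ℕ, 1 ≤ j → j ≤ N → 0 < lab j)
    (hlba : ∀ j : ℕ, 1 ≤ j → j ≤ N → 0 < lba j)
    (hlbb : ∀ j : ℕ, 1 ≤ j → j ≤ N → 0 < lbb j)
    (hlam1 : laa 1 = lab 1) (hmu1 : lba 1 = lbb 1)
    (hK : Kmax N laa lab < min (dR L) (dO L / 2))
    (hK' : Kmax N lba lbb < min (dR L) (dO L / 2)) :
    Pl L laa lab ∈ Faisc N ∧ Pl L lba lbb ∈ Faisc N ∧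
    (∀ t ∈ Icc (0 : ℝ) 1,
      (1 - t) • Pl L laa lab + t • Pl L lba lbb
          = Pl L (fun j => (1 - t) * laa j + t * lba j)
              (fun j => (1 - t) * lab j + t * lbb j) ∧
      (1 - t) • Pl L laa lab + t • Pl L lba lbb ∈ Faisc N) ∧
    JoinedIn (Faisc N) (Pl L laa lab) (Pl L lba lbb) := by
  have hRef : IsReflexive L.1 L.2 := hL.2
  have hFa : Pl L laa lab ∈ Faisc N :=
    corePl N hN L hRef hc0 hc1 laa lab hlaa hlab hlam1 hK
  have hFb : Pl L lba lbb ∈ Faisc N :=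
    corePl N hN L hRef hc0 hc1 lba lbb hlba hlbb hmu1 hK'
  -- the interpolation identity
  have heqt : ∀ t : ℝ, (1 - t) • Pl L laa lab + t • Pl L lba lbb
      = Pl L (fun j => (1 - t) * laa j + t * lba j)
          (fun j => (1 - t) * lab j + t * lbb j) := by
    intro t
    refine Prod.ext ?_ ?_
    · funext i
      show (1 - t) • (Pl L laa lab).1 i + t • (Pl L lba lbb).1 i = _
      simp only [Pl]
      split_ifs with h
      · module
      · module
    · funext i
      show (1 - t) • (Pl L laa lab).2 i + t • (Pl L lba lbb).2 i = _
      simp only [Pl]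
      split_ifs with h
      · module
      · module
  -- membership of the blended beam
  have hK0a : 0 < Kmax N laa lab :=
    lt_of_lt_of_le (hlaa 1 le_rfl hN) (le_Kmax le_rfl hN).1
  have hmem : ∀ t ∈ Icc (0 : ℝ) 1,
      (1 - t) • Pl L laa lab + t • Pl L lba lbb ∈ Faisc N := by
    intro t ht
    rw [heqt t]
    have hpos1 : ∀ j : ℕ, 1 ≤ j → j ≤ N → 0 < (1 - t) * laa j + t * lba j := by
      intro j h1 h2
      rcases lt_or_ge t 1 with h | h
      · have := mul_pos (sub_pos.mpr h) (hlaa j h1 h2)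
        have := mul_nonneg ht.1 (hlba j h1 h2).le
        linarith
      · have ht1 : t = 1 := le_antisymm ht.2 h
        rw [ht1]
        have := hlba j h1 h2
        nlinarith
    have hpos2 : ∀ j : ℕ, 1 ≤ j → j ≤ N → 0 < (1 - t) * lab j + t * lbb j := by
      intro j h1 h2
      rcases lt_or_ge t 1 with h | h
      · have := mul_pos (sub_pos.mpr h) (hlab j h1 h2)
        have := mul_nonneg ht.1 (hlbb j h1 h2).le
        linarith
      · have ht1 : t = 1 := le_antisymm ht.2 h
        rw [ht1]
        have := hlbb j h1 h2
        nlinarith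
    have hone : (1 - t) * laa 1 + t * lba 1 = (1 - t) * lab 1 + t * lbb 1 := by
      rw [hlam1, hmu1]
    have hKle : Kmax N (fun j => (1 - t) * laa j + t * lba j)
        (fun j => (1 - t) * lab j + t * lbb j)
        ≤ max (Kmax N laa lab) (Kmax N lba lbb) := by
      apply Real.sSup_le
      · rintro r ⟨j, h1, h2, rfl⟩
        dsimp only
        have a1 := (le_Kmax (N := N) (la := laa) (lb := lab) h1 h2).1
        have a2 := (le_Kmax (N := N) (la := laa) (lb := lab) h1 h2).2
        have b1 := (le_Kmax (N := N) (la := lba) (lb := lbb) h1 h2).1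
        have b2 := (le_Kmax (N := N) (la := lba) (lb := lbb) h1 h2).2
        have m1 := le_max_left (Kmax N laa lab) (Kmax N lba lbb)
        have m2 := le_max_right (Kmax N laa lab) (Kmax N lba lbb)
        apply max_le
        · have g1 := mul_nonneg (by linarith [ht.2] : (0:ℝ) ≤ 1 - t)
            (by linarith : (0:ℝ) ≤ max (Kmax N laa lab) (Kmax N lba lbb) - laa j)
          have g2 := mul_nonneg ht.1
            (by linarith : (0:ℝ) ≤ max (Kmax N laa lab) (Kmax N lba lbb) - lba j)
          nlinarith
        · have g1 := mul_nonneg (by linarith [ht.2] : (0:ℝ) ≤ 1 - t)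
            (by linarith : (0:ℝ) ≤ max (Kmax N laa lab) (Kmax N lba lbb) - lab j)
          have g2 := mul_nonneg ht.1
            (by linarith : (0:ℝ) ≤ max (Kmax N laa lab) (Kmax N lba lbb) - lbb j)
          nlinarith
      · exact le_trans hK0a.le (le_max_left _ _)
    have hKblend : Kmax N (fun j => (1 - t) * laa j + t * lba j)
        (fun j => (1 - t) * lab j + t * lbb j) < min (dR L) (dO L / 2) :=
      lt_of_le_of_lt hKle (max_lt hK hK')
    exact corePl N hN L hRef hc0 hc1 _ _ hpos1 hpos2 hone hKblend
  refine ⟨hFa, hFb, fun t ht => ⟨heqt t, hmem t ht⟩, ?_⟩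
  refine ⟨⟨⟨fun s => (1 - (s : ℝ)) • Pl L laa lab + (s : ℝ) • Pl L lba lbb, ?_⟩, ?_, ?_⟩, ?_⟩
  · exact ((continuous_const.sub continuous_subtype_val).smul continuous_const).add
      (continuous_subtype_val.smul continuous_const)
  · simp
  · simp
  · intro s
    exact hmem (s : ℝ) ⟨s.2.1, s.2.2⟩
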